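/- Let f be a slice regular function on a symmetric slice domain Ω ⊆ ℍ (or 𝕆) with values in the same algebra, such that f(Ω_I) ⊆ ℂ_I for some imaginary unit I ∈ 𝕊. Then for every x + yJ ∈ Ω with J ∈ 𝕊, the convex combination identity |f(x+yJ)|² = ((1+⟨I,J⟩)/2)|f(x+yI)|² + ((1-⟨I,J⟩)/2)|f(x-yI)|² holds. -/

import Mathlib

noncomputable section

open Quaternion

/-- The octonions, realized via the Cayley–Dickson construction over the quaternions. -/
abbrev Octo := ℍ[ℝ] × ℍ[ℝ]

namespace Octo

/-- Octonion multiplication (Cayley–Dickson): (z₁,z₂)(w₁,w₂) = (z₁w₁ - w̄₂z₂, z₂w̄₁ + w₂z₁). -/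
def mul' (z w : Octo) : Octo :=
  (z.1 * w.1 - star w.2 * z.2, z.2 * star w.1 + w.2 * z.1)

/-- Octonionic conjugation. -/
def conj' (x : Octo) : Octo := (star x.1, -x.2)

/-- The multiplicative unit of the octonions. -/
def one' : Octo := (1, 0)

/-- The embedding of the reals into the octonions. -/
def emb (x : ℝ) : Octo := (algebraMap ℝ ℍ[ℝ] x, 0)

/-- The real part of an octonion. -/
def re' (x : Octo) : ℝ := x.1.re

/-- The imaginary part of an octonion. -/
def im' (x : Octo) : Octo := x - emb (re' x)

/-- The standard Euclidean inner product on 𝕆 ≅ ℝ⁸. -/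
def inner' (x y : Octo) : ℝ := (inner ℝ x.1 y.1 : ℝ) + (inner ℝ x.2 y.2 : ℝ)

/-- The Euclidean norm on the octonions. -/
def norm' (x : Octo) : ℝ := Real.sqrt (inner' x x)

/-- The multiplicative inverse of a nonzero octonion. -/
def inv' (x : Octo) : Octo := (inner' x x)⁻¹ • conj' x

/-- The associator [u,v,w] = (uv)w - u(vw). -/
def assoc' (u v w : Octo) : Octo := mul' (mul' u v) w - mul' u (mul' v w)

/-- n-th power of an octonion. -/
def pow' (x : Octo) : ℕ → Octo
  | 0 => one'
  | n + 1 => mul' x (pow' x n)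

/-- A purely imaginary unit octonion: I ∈ 𝕊 iff I² = -1. -/
def IsImUnit (I : Octo) : Prop := mul' I I = - one'

/-- The point x + yI on the slice ℂ_I. -/
def pt (I : Octo) (p : ℝ × ℝ) : Octo := emb p.1 + p.2 • I

/-- The slice ℂ_I = ℝ ⊕ Iℝ. -/
def sliceSet (I : Octo) : Set Octo := {z | ∃ p : ℝ × ℝ, z = pt I p}

/-- e^{θI} = cos θ + (sin θ) I. -/
def expI (θ : ℝ) (I : Octo) : Octo := emb (Real.cos θ) + Real.sin θ • I

/-- Slice regularity: on every slice ℂ_I the function is holomorphic, i.e. real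
differentiable with ∂f/∂x + I ∂f/∂y = 0. -/
def SliceRegular (Ω : Set Octo) (f : Octo → Octo) : Prop :=
  ∀ I, IsImUnit I → ∀ p : ℝ × ℝ, pt I p ∈ Ω →
    ∃ fx fy : Octo,
      HasFDerivAt (fun q : ℝ × ℝ => f (pt I q))
        ((ContinuousLinearMap.fst ℝ ℝ ℝ).smulRight fx
          + (ContinuousLinearMap.snd ℝ ℝ ℝ).smulRight fy) p
      ∧ fx + mul' I fy = 0

/-- Symmetric slice domain: open, connected, meeting the real axis, with each slice a
domain, and axially symmetric. -/
def SymSliceDomain (Ω : Set Octo) : Prop :=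
  IsOpen Ω ∧ IsConnected Ω ∧ (∃ x : ℝ, emb x ∈ Ω) ∧
  (∀ I, IsImUnit I → IsConnected {p : ℝ × ℝ | pt I p ∈ Ω}) ∧
  (∀ I J, IsImUnit I → IsImUnit J → ∀ p : ℝ × ℝ, pt I p ∈ Ω → pt J p ∈ Ω)

/-- The open unit ball 𝔹 of the octonions. -/
def ball1 : Set Octo := {z | norm' z < 1}

end Octo

/-!
On each slice `ℂ_J`, slice regularity is the Cauchy–Riemann system `∂ₓg + J ∂_y g = 0`; pairing
with real functionals twisted by `J` makes such a `g` holomorphic in `x + iy`, so it obeys the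
identity principle. The map `v ↦ ½(v - J(Iv))` intertwines left multiplication by `I` with left
multiplication by `J`, so the right-hand side of the representation formula is `J`-holomorphic;
it agrees with `f` on the real axis, hence everywhere. If `f(x + yI) = a + bI` and
`f(x - yI) = c + dI`, the formula writes `f(x + yJ)` in `1, I, J, JI`, whose Gram matrix
involves only `⟨I, J⟩`, and expanding the norm gives the convex combination.
-/

section CauchyRiemann

open Complex Filter Topology

variable {E : Type*} [NormedAddCommGroup E] [NormedSpace ℝ E]

def CauchyRiemannOn (T : E →L[ℝ] E) (U : Set (ℝ × ℝ)) (g : ℝ × ℝ → E) : Prop :=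
  ∀ p ∈ U, ∃ gx gy : E,
    HasFDerivAt g ((ContinuousLinearMap.fst ℝ ℝ ℝ).smulRight gx
      + (ContinuousLinearMap.snd ℝ ℝ ℝ).smulRight gy) p ∧ gx + T gy = 0

variable {T : E →L[ℝ] E} {U : Set (ℝ × ℝ)} {g : ℝ × ℝ → E}

theorem CauchyRiemannOn.mono {V : Set (ℝ × ℝ)} (hg : CauchyRiemannOn T U g) (hVU : V ⊆ U) :
    CauchyRiemannOn T V g :=
  fun p hp => hg p (hVU hp)

theorem CauchyRiemannOn.sub {g' : ℝ × ℝ → E} (hg : CauchyRiemannOn T U g)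
    (hg' : CauchyRiemannOn T U g') :
    CauchyRiemannOn T U (fun p => g p - g' p) := by
  intro p hp
  obtain ⟨gx, gy, hd, hcr⟩ := hg p hp
  obtain ⟨gx', gy', hd', hcr'⟩ := hg' p hp
  refine ⟨gx - gx', gy - gy', (hd.sub hd').congr_fderiv ?_, ?_⟩
  · ext <;> simp
  · rw [map_sub, sub_add_sub_comm, hcr, hcr', sub_zero]

theorem CauchyRiemannOn.add {g' : ℝ × ℝ → E} (hg : CauchyRiemannOn T U g)
    (hg' : CauchyRiemannOn T U g') :
    CauchyRiemannOn T U (fun p => g p + g' p) := by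
  intro p hp
  obtain ⟨gx, gy, hd, hcr⟩ := hg p hp
  obtain ⟨gx', gy', hd', hcr'⟩ := hg' p hp
  refine ⟨gx + gx', gy + gy', (hd.add hd').congr_fderiv ?_, ?_⟩
  · ext <;> simp
  · rw [map_add, add_add_add_comm, hcr, hcr', add_zero]

theorem CauchyRiemannOn.clm_comp {F : Type*} [NormedAddCommGroup F] [NormedSpace ℝ F]
    {S : F →L[ℝ] F} (hg : CauchyRiemannOn T U g) (A : E →L[ℝ] F) (hA : ∀ v, A (T v) = S (A v)) :
    CauchyRiemannOn S U (fun p => A (g p)) := by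
  intro p hp
  obtain ⟨gx, gy, hd, hcr⟩ := hg p hp
  refine ⟨A gx, A gy, (A.hasFDerivAt.comp p hd).congr_fderiv ?_, ?_⟩
  · ext <;> simp
  · rw [← hA, ← map_add, hcr, map_zero]

theorem CauchyRiemannOn.differentiableOn_complex (hg : CauchyRiemannOn T U g) (L : E →L[ℝ] ℂ)
    (hL : ∀ v, L (T v) = I * L v) :
    DifferentiableOn ℂ (fun z => L (g (equivRealProdCLM z))) (equivRealProdCLM ⁻¹' U) := by
  intro z hz
  obtain ⟨gx, gy, hd, hcr⟩ := hg _ hz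
  have hD := L.hasFDerivAt.comp z (hd.comp z equivRealProdCLM.hasFDerivAt)
  refine (hD.complexOfReal_hasFDerivAt ?_).differentiableAt.differentiableWithinAt
  simp [eq_neg_of_add_eq_zero_left hcr, hL, ← mul_assoc]

theorem CauchyRiemannOn.eqOn_zero (hT : ∀ v, T (T v) = -v) (hg : CauchyRiemannOn T U g)
    (hUo : IsOpen U) (hUc : IsPreconnected U) {x₀ : ℝ} (hx₀ : (x₀, 0) ∈ U)
    (hreal : ∀ x : ℝ, (x, 0) ∈ U → g (x, 0) = 0) : Set.EqOn g 0 U := by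
  intro p hp
  refine SeparatingDual.eq_zero_of_forall_dual_eq_zero (R := ℝ) fun φ => ?_
  set L : E →L[ℝ] ℂ := φ.smulRight (1 : ℂ) - (φ ∘L T).smulRight I
  have hL : ∀ v, L (T v) = I * L v := fun v => by
    apply Complex.ext <;> simp [L, hT]
  have hzero : Set.EqOn (fun z => L (g (equivRealProdCLM z))) 0 (equivRealProdCLM ⁻¹' U) := by
    refine ((hg.differentiableOn_complex L hL).analyticOnNhd
      (hUo.preimage equivRealProdCLM.continuous)).eqOn_zero_of_preconnected_of_frequently_eq_zero
      (equivRealProdCLM.toHomeomorph.isPreconnected_preimage.2 hUc) (z₀ := (x₀ : ℂ))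
      (by simpa using hx₀) ?_
    have hnear : ∀ᶠ t : ℝ in 𝓝[≠] x₀, (t, (0 : ℝ)) ∈ U :=
      mem_nhdsWithin_of_mem_nhds <|
        (hUo.preimage (by fun_prop : Continuous fun t : ℝ => (t, (0 : ℝ)))).mem_nhds hx₀
    have hofReal : Tendsto ((↑) : ℝ → ℂ) (𝓝[≠] x₀) (𝓝[≠] (x₀ : ℂ)) :=
      continuous_ofReal.continuousWithinAt.tendsto_nhdsWithin fun t ht => by simpa using ht
    exact hofReal.frequently (hnear.mono fun t ht => by simp [hreal t ht]).frequently
  simpa [L] using congrArg re (hzero (show equivRealProdCLM.symm p ∈ _ by simpa using hp))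

end CauchyRiemann

namespace Octo

lemma mul'_add_right (z w w' : Octo) : mul' z (w + w') = mul' z w + mul' z w' := by
  ext : 1 <;> simp only [mul', Prod.fst_add, Prod.snd_add, star_add] <;> noncomm_ring

lemma mul'_smul_right (z : Octo) (r : ℝ) (w : Octo) : mul' z (r • w) = r • mul' z w := by
  ext : 1 <;> simp [mul', smul_sub, smul_add]

lemma neg_mul' (z w : Octo) : mul' (-z) w = -mul' z w := by
  ext : 1 <;> simp only [mul', Prod.fst_neg, Prod.snd_neg] <;> noncomm_ring

lemma mul'_one' (z : Octo) : mul' z one' = z := by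
  ext : 1 <;> simp [mul', one']

lemma one'_mul' (z : Octo) : mul' one' z = z := by
  ext : 1 <;> simp [mul', one']

def mulCLM (z : Octo) : Octo →L[ℝ] Octo :=
  LinearMap.toContinuousLinearMap
    { toFun := mul' z
      map_add' := mul'_add_right z
      map_smul' := mul'_smul_right z }

@[simp] lemma mulCLM_apply (z v : Octo) : mulCLM z v = mul' z v := rfl

lemma mul'_sub_right (z w w' : Octo) : mul' z (w - w') = mul' z w - mul' z w' :=
  (mulCLM z).map_sub w w'

lemma mul'_neg_right (z w : Octo) : mul' z (-w) = -mul' z w :=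
  (mulCLM z).map_neg w

lemma emb_eq_smul (r : ℝ) : emb r = r • one' := by
  ext : 1 <;> simp [emb, one', Algebra.algebraMap_eq_smul_one]

lemma pt_real (I : Octo) (x : ℝ) : pt I (x, 0) = emb x := by
  simp [pt]

lemma pt_neg (I : Octo) (x y : ℝ) : pt (-I) (x, y) = pt I (x, -y) := by
  simp [pt]

lemma continuous_pt (I : Octo) : Continuous (pt I) := by
  show Continuous fun p : ℝ × ℝ => emb p.1 + p.2 • I
  simp only [emb_eq_smul]
  fun_prop

lemma inner'_comm (x y : Octo) : inner' x y = inner' y x := by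
  simp only [inner', real_inner_comm]

lemma inner'_add_left (x y z : Octo) : inner' (x + y) z = inner' x z + inner' y z := by
  simp only [inner', Prod.fst_add, Prod.snd_add, inner_add_left]
  ring

lemma inner'_add_right (x y z : Octo) : inner' x (y + z) = inner' x y + inner' x z := by
  rw [inner'_comm, inner'_add_left, inner'_comm y, inner'_comm z]

lemma inner'_smul_left (r : ℝ) (x y : Octo) : inner' (r • x) y = r * inner' x y := by
  simp only [inner', Prod.smul_fst, Prod.smul_snd, real_inner_smul_left]
  ring

lemma inner'_smul_right (r : ℝ) (x y : Octo) : inner' x (r • y) = r * inner' x y := by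
  rw [inner'_comm, inner'_smul_left, inner'_comm]

lemma inner'_neg_right (x y : Octo) : inner' x (-y) = -inner' x y := by
  simpa using inner'_smul_right (-1) x y

lemma inner'_self (x : Octo) : inner' x x = Quaternion.normSq x.1 + Quaternion.normSq x.2 := by
  simp [inner', Quaternion.normSq_eq_norm_mul_self, sq]

lemma norm'_sq (x : Octo) : norm' x ^ 2 = inner' x x :=
  Real.sq_sqrt <| by
    rw [inner'_self]; exact add_nonneg Quaternion.normSq_nonneg Quaternion.normSq_nonneg

lemma inner'_one'_one' : inner' one' one' = 1 := by
  simp [inner', one']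

lemma inner'_mul'_mul'_left (x y z : Octo) :
    inner' (mul' x y) (mul' x z) = inner' x x * inner' y z := by
  simp only [inner', Quaternion.inner_def]
  simp [mul']
  ring

lemma inner'_mul'_mul'_right (x y z : Octo) :
    inner' (mul' y x) (mul' z x) = inner' x x * inner' y z := by
  simp only [inner', Quaternion.inner_def]
  simp [mul']
  ring

lemma inner'_mul'_left (x y z : Octo) : inner' (mul' x y) z = inner' y (mul' (conj' x) z) := by
  simp [inner', mul', conj', Quaternion.inner_def]
  ring

namespace IsImUnit

variable {I J : Octo}

lemma re_eq_zero (hI : IsImUnit I) : I.1.re = 0 := by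
  have h1 := congrArg Prod.fst hI
  have h2 := congrArg Prod.snd hI
  simp [mul', one', Quaternion.ext_iff] at h1 h2
  obtain ⟨e0, e1, e2, e3⟩ := h1
  obtain ⟨f0, f1, f2, f3⟩ := h2
  have hb0 : I.1.re * I.2.re = 0 := by rcases f0 with h | h <;> simp [h]
  have key : I.1.re * (I.1.re ^ 2 + 1) = 0 := by
    linear_combination I.1.re * e0 + (I.1.imI / 2) * e1 + (I.1.imJ / 2) * e2
      + (I.1.imK / 2) * e3 + I.2.re * hb0 + (I.2.imI / 2) * f1 + (I.2.imJ / 2) * f2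
      + (I.2.imK / 2) * f3
  nlinarith [sq_nonneg I.1.re]

lemma star_fst (hI : IsImUnit I) : star I.1 = -I.1 := by
  ext <;> simp [hI.re_eq_zero]

lemma normSq_add (hI : IsImUnit I) : Quaternion.normSq I.1 + Quaternion.normSq I.2 = 1 := by
  have e0 := congrArg (fun v : Octo => v.1.re) hI
  simp [mul', one'] at e0
  simp only [Quaternion.normSq_def', hI.re_eq_zero] at e0 ⊢
  linear_combination -e0

lemma mul'_mul'_self (hI : IsImUnit I) (v : Octo) : mul' I (mul' I v) = -v := by
  have hn := hI.normSq_add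
  have ha := hI.star_fst
  obtain ⟨a, b⟩ := I
  obtain ⟨u, w⟩ := v
  dsimp only at ha hn
  have haa : a * a = -((Quaternion.normSq a : ℝ) : ℍ[ℝ]) := by
    rw [← Quaternion.self_mul_star, ha, mul_neg, neg_neg]
  ext : 1
  · calc _ = a * a * u - u * (star b * b) := by
          simp only [mul', star_add, star_mul, star_star, ha]; noncomm_ring
      _ = -u := by
          rw [haa, Quaternion.star_mul_self]
          simp only [neg_mul, Quaternion.coe_mul_eq_smul, Quaternion.mul_coe_eq_smul]
          linear_combination (norm := module) (-hn) • u
  · calc _ = w * (a * a) - b * star b * w := by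
          simp only [mul', star_sub, star_add, star_mul, star_star, ha]; noncomm_ring
      _ = -w := by
          rw [haa, Quaternion.self_mul_star]
          simp only [mul_neg, Quaternion.coe_mul_eq_smul, Quaternion.mul_coe_eq_smul]
          linear_combination (norm := module) (-hn) • w

lemma neg (hI : IsImUnit I) : IsImUnit (-I) := by
  rw [IsImUnit, neg_mul', ← mulCLM_apply, map_neg, mulCLM_apply, neg_neg, hI]

lemma conj'_eq (hI : IsImUnit I) : conj' I = -I := by
  ext : 1 <;> simp [conj', hI.star_fst]

lemma inner'_self (hI : IsImUnit I) : inner' I I = 1 := by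
  rw [Octo.inner'_self, hI.normSq_add]

lemma inner'_one' (hI : IsImUnit I) : inner' one' I = 0 := by
  simp [inner', one', Quaternion.inner_def, hI.re_eq_zero]

lemma inner'_one'_mul' (hJ : IsImUnit J) (I : Octo) : inner' one' (mul' J I) = -inner' I J := by
  rw [inner'_comm, inner'_mul'_left, hJ.conj'_eq, neg_mul', mul'_one', inner'_neg_right]

lemma inner'_mul'_right (hJ : IsImUnit J) (I : Octo) : inner' I (mul' J I) = 0 := by
  simpa [one'_mul', hJ.inner'_one'] using inner'_mul'_mul'_right I one' J

lemma inner'_mul'_left (hI : IsImUnit I) (J : Octo) : inner' J (mul' J I) = 0 := by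
  simpa [mul'_one', hI.inner'_one'] using inner'_mul'_mul'_left J one' I

lemma inner'_mul'_self (hI : IsImUnit I) (hJ : IsImUnit J) :
    inner' (mul' J I) (mul' J I) = 1 := by
  rw [inner'_mul'_mul'_left, hI.inner'_self, hJ.inner'_self, mul_one]

lemma inner'_self_of_basis (hI : IsImUnit I) (hJ : IsImUnit J) (α β γ δ : ℝ) :
    inner' (α • one' + β • I + γ • J + δ • mul' J I) (α • one' + β • I + γ • J + δ • mul' J I)
      = α ^ 2 + β ^ 2 + γ ^ 2 + δ ^ 2 + 2 * inner' I J * (β * γ - α * δ) := by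
  simp only [inner'_add_left, inner'_add_right, inner'_smul_left, inner'_smul_right,
    inner'_comm _ one', inner'_comm (mul' J I), inner'_comm J I, inner'_one'_one',
    hI.inner'_one', hJ.inner'_one', hI.inner'_self, hJ.inner'_self, hJ.inner'_one'_mul',
    hJ.inner'_mul'_right, hI.inner'_mul'_left, inner'_mul'_self hI hJ]
  ring

lemma inner'_pt_self (hI : IsImUnit I) (p : ℝ × ℝ) :
    inner' (pt I p) (pt I p) = p.1 ^ 2 + p.2 ^ 2 := by
  simp only [pt, emb_eq_smul, inner'_add_left, inner'_add_right, inner'_smul_left,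
    inner'_smul_right, inner'_comm I one', inner'_one'_one', hI.inner'_one', hI.inner'_self]
  ring

end IsImUnit

section Representation

theorem SliceRegular.cauchyRiemannOn {Ω : Set Octo} {f : Octo → Octo} (hf : SliceRegular Ω f)
    {I : Octo} (hI : IsImUnit I) :
    CauchyRiemannOn (mulCLM I) {p | pt I p ∈ Ω} (fun p => f (pt I p)) :=
  hf I hI

-- `reprMap I J v + reprMap (-I) J w = ½(v + w) - ½J(I(v - w))` is the right-hand side of the
-- representation formula, with `v = f(z)` and `w = f(z̄)`.
def reprMap (I J : Octo) : Octo →L[ℝ] Octo := (2⁻¹ : ℝ) • (1 - mulCLM J * mulCLM I)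

lemma reprMap_apply (I J v : Octo) : reprMap I J v = (2⁻¹ : ℝ) • (v - mul' J (mul' I v)) := rfl

variable {I J : Octo}

lemma reprMap_mul' (hI : IsImUnit I) (hJ : IsImUnit J) (v : Octo) :
    reprMap I J (mul' I v) = mul' J (reprMap I J v) := by
  simp only [reprMap_apply, mul'_smul_right, mul'_sub_right, hI.mul'_mul'_self,
    hJ.mul'_mul'_self, mul'_neg_right]
  module

lemma reprMap_add_reprMap_neg (I J v : Octo) : reprMap I J v + reprMap (-I) J v = v := by
  simp only [reprMap_apply, neg_mul', mul'_neg_right]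
  module

lemma reprMap_pt_add_reprMap_neg_pt (hI : IsImUnit I) (J : Octo) (a b c d : ℝ) :
    reprMap I J (pt I (a, b)) + reprMap (-I) J (pt I (c, d))
      = ((a + c) / 2) • one' + ((b + d) / 2) • I + ((b - d) / 2) • J
        + ((c - a) / 2) • mul' J I := by
  have hII : mul' I I = -one' := hI
  simp only [reprMap_apply, pt, emb_eq_smul, neg_mul', mul'_add_right, mul'_smul_right,
    mul'_neg_right, mul'_one', hII]
  module

theorem SliceRegular.apply_pt_eq_reprMap_add {Ω : Set Octo} {f : Octo → Octo}
    (hΩ : SymSliceDomain Ω) (hf : SliceRegular Ω f) (hI : IsImUnit I) (hJ : IsImUnit J) {p : ℝ × ℝ} (hp : pt J p ∈ Ω) :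
    f (pt J p) = reprMap I J (f (pt I p)) + reprMap (-I) J (f (pt (-I) p)) := by
  obtain ⟨hΩo, -, ⟨x₀, hx₀⟩, hconn, hsym⟩ := hΩ
  have hrepr : CauchyRiemannOn (mulCLM J) {p | pt J p ∈ Ω} fun p =>
      reprMap I J (f (pt I p)) + reprMap (-I) J (f (pt (-I) p)) :=
    (((hf.cauchyRiemannOn hI).mono fun q => hsym J I hJ hI q).clm_comp _ (reprMap_mul' hI hJ)).add
      (((hf.cauchyRiemannOn hI.neg).mono fun q => hsym J (-I) hJ hI.neg q).clm_comp _
        (reprMap_mul' hI.neg hJ))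
  refine sub_eq_zero.1 <| ((hf.cauchyRiemannOn hJ).sub hrepr).eqOn_zero hJ.mul'_mul'_self
    (hΩo.preimage (continuous_pt J)) (hconn J hJ).isPreconnected (x₀ := x₀)
    (by simpa [pt_real] using hx₀) (fun x _ => ?_) hp
  simp only [pt_real, reprMap_add_reprMap_neg, sub_self]

end Representation

end Octo

open Octo in
/-- Convex combination identity for slice regular functions preserving one slice. -/
theorem convex_combination_identity (Ω : Set Octo) (hΩ : SymSliceDomain Ω)
    (f : Octo → Octo) (hf : SliceRegular Ω f)
    (I : Octo) (hI : IsImUnit I)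
    (hsl : ∀ z ∈ Ω ∩ sliceSet I, f z ∈ sliceSet I)
    (J : Octo) (hJ : IsImUnit J) (x y : ℝ) (hmem : pt J (x, y) ∈ Ω) :
    (norm' (f (pt J (x, y))))^2
      = ((1 + inner' I J)/2) * (norm' (f (pt I (x, y))))^2
      + ((1 - inner' I J)/2) * (norm' (f (pt I (x, -y))))^2 := by
  have hsym := hΩ.2.2.2.2
  obtain ⟨⟨a, b⟩, hab⟩ := hsl _ ⟨hsym J I hJ hI _ hmem, (x, y), rfl⟩
  obtain ⟨⟨c, d⟩, hcd⟩ := hsl _ ⟨pt_neg I x y ▸ hsym J (-I) hJ hI.neg _ hmem, (x, -y), rfl⟩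
  rw [norm'_sq, norm'_sq, norm'_sq, hf.apply_pt_eq_reprMap_add hΩ hI hJ hmem, pt_neg, hab, hcd,
    reprMap_pt_add_reprMap_neg_pt hI, IsImUnit.inner'_self_of_basis hI hJ, hI.inner'_pt_self,
    hI.inner'_pt_self]
  ring
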